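/- Let H be a connected finite simple block graph and let B be a block of H with vertex set V(B) = {u_1, u_2, …, u_k}. For each 1 ≤ i ≤ k, let G_i denote the connected component containing u_i of the subgraph of H induced by (V(H) ∖ V(B)) ∪ {u_i}. Suppose T_1 ⊆ V(G_1) ∖ {u_1} is such that T_1 dominates every vertex of V(G_1) ∖ ({u_1} ∪ T_1), no vertex of T_1 is adjacent to u_1, and G_1[T_1] has a perfect matching; and suppose for each 2 ≤ i ≤ k that T_i is a paired-dominating set of G_i with u_i ∉ T_i. Then S = T_1 ∪ T_2 ∪ … ∪ T_k is a dominating set of the graph H − u_1, no vertex of S is adjacent to u_1 in H, and the induced subgraph H[S] has a perfect matching. -/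

import Mathlib

open SimpleGraph

variable {V : Type*}

/-- `S` is a dominating set of `G`. -/
def Dominating (G : SimpleGraph V) (S : Set V) : Prop :=
  ∀ v ∉ S, ∃ u ∈ S, G.Adj v u

/-- Within the subgraph of `G` induced by `A` (for `S ⊆ A`), the set `S` dominates
every vertex of `A \ S`. -/
def DominatingOn (G : SimpleGraph V) (A S : Set V) : Prop :=
  ∀ v ∈ A, v ∉ S → ∃ w ∈ S, G.Adj v w

/-- The induced subgraph `G[S]` has a perfect matching, i.e. there is a matching of `G`
whose vertex set is exactly `S`. -/
def HasPerfectMatchingOn (G : SimpleGraph V) (S : Set V) : Prop :=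
  ∃ M : G.Subgraph, M.verts = S ∧ M.IsMatching

/-- `S` is a paired-dominating set of `G`. -/
def PairedDominating (G : SimpleGraph V) (S : Set V) : Prop :=
  Dominating G S ∧ HasPerfectMatchingOn G S

/-- `v` is a cut vertex: deleting it disconnects the graph. -/
def IsCutVertex (G : SimpleGraph V) (v : V) : Prop :=
  ¬ (G.induce ({v}ᶜ : Set V)).Preconnected

/-- The graph has no cut vertex. -/
def HasNoCutVertex (G : SimpleGraph V) : Prop :=
  ∀ v : V, ¬ IsCutVertex G v

/-- `B` is a block of `G`: a maximal vertex set inducing a connected subgraph with no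
cut vertex. -/
def IsBlock (G : SimpleGraph V) (B : Set V) : Prop :=
  (G.induce B).Connected ∧ HasNoCutVertex (G.induce B) ∧
    ∀ B' : Set V, B ⊆ B' → (G.induce B').Connected → HasNoCutVertex (G.induce B') → B' = B

/-- `G` is a block graph: every block is a complete subgraph. -/
def IsBlockGraph (G : SimpleGraph V) : Prop :=
  ∀ B : Set V, IsBlock G B → B.Pairwise G.Adj

/-- The vertex set of the connected component containing `u` of the subgraph of `G`
induced by `A`. -/
def componentOf (G : SimpleGraph V) (A : Set V) (u : V) : Set V :=
  {v | ∃ (hu : u ∈ A) (hv : v ∈ A), (G.induce A).Reachable ⟨u, hu⟩ ⟨v, hv⟩}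

/-!
Two distinct vertices of a block `B` cannot be joined by a walk each of whose edges leaves `B`:
the bypass of such a walk is a path between vertices of `B`, attaching it to `B` keeps the
induced subgraph connected and free of cut vertices, so by maximality the path lies in `B` and
has no edges. Hence the components `G' i` are pairwise disjoint. This makes the `T i` disjoint,
so their matchings combine, and keeps every `T i` with `i ≠ 0` away from `u 0`, since a
neighbour of `u 0` outside `B` lies in `G' 0`. As `H` is connected, every vertex lies in some
`G' i`, so the `T i` together dominate `H - u 0`.
-/

section

variable {H : SimpleGraph V} {A B s t : Set V} {a b c u v w x y : V}

theorem mem_componentOf_iff_exists_walk :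
    v ∈ componentOf H A u ↔ ∃ W : H.Walk u v, ∀ z ∈ W.support, z ∈ A := by
  constructor
  · rintro ⟨hu, hv, ⟨q⟩⟩
    refine ⟨q.map (Embedding.induce A).toHom, fun z hz => ?_⟩
    obtain ⟨z', -, rfl⟩ := List.mem_map.mp (Walk.support_map _ q ▸ hz)
    exact z'.2
  · rintro ⟨W, hW⟩
    exact ⟨hW _ W.start_mem_support, hW _ W.end_mem_support, ⟨W.induce A hW⟩⟩

theorem self_mem_componentOf (hu : u ∈ A) : u ∈ componentOf H A u :=
  ⟨hu, hu, .rfl⟩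

theorem mem_componentOf_of_adj (hv : v ∈ componentOf H A u) (hw : w ∈ A) (hvw : H.Adj v w) :
    w ∈ componentOf H A u :=
  let ⟨hu, hv, hr⟩ := hv
  ⟨hu, hw, hr.trans (show (H.induce A).Adj ⟨v, hv⟩ ⟨w, hw⟩ from hvw).reachable⟩

theorem exists_mem_componentOf (hH : H.Connected) (hB : B.Nonempty) (v : V) :
    ∃ b ∈ B, v ∈ componentOf H (Bᶜ ∪ {b}) b := by
  obtain ⟨x, hx⟩ := hB
  obtain ⟨W⟩ := hH.preconnected v x
  induction W with
  | nil => exact ⟨_, hx, self_mem_componentOf (Or.inr rfl)⟩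
  | @cons v c x hvc _ ih =>
    by_cases hv : v ∈ B
    · exact ⟨v, hv, self_mem_componentOf (Or.inr rfl)⟩
    · obtain ⟨b, hb, hc⟩ := ih hx
      exact ⟨b, hb, mem_componentOf_of_adj hc (Or.inl hv) hvc.symm⟩

theorem preconnected_induce_of_forall_exists_walk (hst : s ⊆ t) (hs : (H.induce s).Preconnected)
    (h : ∀ x ∈ t, ∃ y ∈ s, ∃ W : H.Walk x y, ∀ z ∈ W.support, z ∈ t) :
    (H.induce t).Preconnected := by
  rintro ⟨x, hx⟩ ⟨y, hy⟩
  obtain ⟨x', hx', Wx, hWx⟩ := h x hx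
  obtain ⟨y', hy', Wy, hWy⟩ := h y hy
  have hx'y' := (hs ⟨x', hx'⟩ ⟨y', hy'⟩).map (H.induceHomOfLE hst).toHom
  exact (Wx.induce t hWx).reachable.trans (hx'y'.trans (Wy.induce t hWy).reachable.symm)

def induceInduceComplSingletonIso (hv : v ∈ A) :
    (H.induce A).induce ({⟨v, hv⟩}ᶜ : Set A) ≃g H.induce (A \ {v}) where
  toFun x := ⟨x.1.1, x.1.2, fun h => x.2 (Subtype.ext h)⟩
  invFun y := ⟨⟨y.1, y.2.1⟩, fun h => y.2.2 (congrArg Subtype.val h)⟩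
  left_inv _ := rfl
  right_inv _ := rfl
  map_rel_iff' := Iff.rfl

theorem hasNoCutVertex_induce_iff :
    HasNoCutVertex (H.induce A) ↔ ∀ v ∈ A, (H.induce (A \ {v})).Preconnected := by
  simp only [HasNoCutVertex, IsCutVertex, not_not, Subtype.forall]
  exact forall₂_congr fun v hv => (induceInduceComplSingletonIso hv).preconnected_iff

theorem SimpleGraph.Walk.IsPath.notMem_support_takeUntil_or_dropUntil [DecidableEq V]
    {p : H.Walk a b} (hp : p.IsPath) (hu : u ∈ p.support) (hvu : v ≠ u) :
    v ∉ (p.takeUntil u hu).support ∨ v ∉ (p.dropUntil u hu).support := by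
  have hnodup := hp.support_nodup
  rw [← p.take_spec hu, Walk.support_append] at hnodup
  rw [or_iff_not_and_not, not_not, not_not, ← Walk.cons_tail_support (p.dropUntil u hu)]
  rintro ⟨hv₁, hv₂⟩
  exact List.disjoint_of_nodup_append hnodup hv₁ ((List.mem_cons.mp hv₂).resolve_left hvu)

theorem IsBlock.preconnected_induce_diff_singleton (hB : IsBlock H B) (v : V) :
    (H.induce (B \ {v})).Preconnected := by
  by_cases hv : v ∈ B
  · exact hasNoCutVertex_induce_iff.mp hB.2.1 v hv
  · rw [Set.sdiff_singleton_eq_self hv]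
    exact hB.1.preconnected

/-- Removing `v` leaves every vertex of the path joined, along the path, to an end other
than `v`. -/
theorem IsBlock.hasNoCutVertex_induce_union_support (hB : IsBlock H B) {p : H.Walk a b}
    (hp : p.IsPath) (ha : a ∈ B) (hb : b ∈ B) :
    HasNoCutVertex (H.induce (B ∪ {z | z ∈ p.support})) := by
  classical
  refine hasNoCutVertex_induce_iff.mpr fun v _ => preconnected_induce_of_forall_exists_walk
    (Set.sdiff_subset_sdiff_left Set.subset_union_left) (hB.preconnected_induce_diff_singleton v) ?_
  rintro x ⟨hxB | hxp, hxv⟩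
  · exact ⟨x, ⟨hxB, hxv⟩, .nil, by simpa using ⟨Or.inl hxB, hxv⟩⟩
  rcases hp.notMem_support_takeUntil_or_dropUntil hxp (Ne.symm hxv) with hv | hv
  · refine ⟨a, ⟨ha, ?_⟩, (p.takeUntil x hxp).reverse, fun z hz => ?_⟩
    · exact fun h => hv (h ▸ Walk.start_mem_support _)
    · rw [Walk.support_reverse, List.mem_reverse] at hz
      exact ⟨Or.inr (p.support_takeUntil_subset_support hxp hz), fun h => hv (h ▸ hz)⟩
  · refine ⟨b, ⟨hb, ?_⟩, p.dropUntil x hxp, fun z hz => ?_⟩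
    · exact fun h => hv (h ▸ Walk.end_mem_support _)
    · exact ⟨Or.inr (p.support_dropUntil_subset_support hxp hz), fun h => hv (h ▸ hz)⟩

theorem IsBlock.support_subset_of_isPath (hB : IsBlock H B) {p : H.Walk a b} (hp : p.IsPath)
    (ha : a ∈ B) (hb : b ∈ B) : {z | z ∈ p.support} ⊆ B := by
  have hconn : (H.induce (B ∪ {z | z ∈ p.support})).Connected :=
    induce_union_connected hB.1.preconnected p.connected_induce_support.preconnected
      ⟨a, ha, p.start_mem_support⟩
  rw [← hB.2.2 _ Set.subset_union_left hconn (hB.hasNoCutVertex_induce_union_support hp ha hb)]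
  exact Set.subset_union_right

theorem exists_notMem_of_mem_edges (W : H.Walk x y) (hW : ∀ z ∈ W.support, z ∈ Bᶜ ∪ {c}) :
    ∀ e ∈ W.edges, ∃ z ∈ e, z ∉ B := by
  intro e he
  induction e using Sym2.ind with | h u v => ?_
  by_contra! huv
  have hu : u = c := (hW u (W.fst_mem_support_of_mem_edges he)).resolve_left
    fun h => h (huv u (Sym2.mem_mk_left u v))
  have hv : v = c := (hW v (W.snd_mem_support_of_mem_edges he)).resolve_left
    fun h => h (huv v (Sym2.mem_mk_right u v))
  exact (W.adj_of_mem_edges he).ne (hu.trans hv.symm)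

theorem IsBlock.eq_of_forall_mem_edges_exists_notMem (hB : IsBlock H B) (ha : a ∈ B)
    (hb : b ∈ B) (W : H.Walk a b) (hW : ∀ e ∈ W.edges, ∃ z ∈ e, z ∉ B) : a = b := by
  classical
  have hsub := hB.support_subset_of_isPath W.bypass_isPath ha hb
  have hnil : W.bypass.edges = [] := List.eq_nil_iff_forall_not_mem.mpr fun e he => by
    obtain ⟨z, hz, hzB⟩ := hW e (W.edges_bypass_subset_edges he)
    exact hzB (hsub (Walk.mem_support_of_mem_edges he hz))
  exact (Walk.edges_eq_nil.mp hnil).eq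

theorem IsBlock.disjoint_componentOf (hB : IsBlock H B) (ha : a ∈ B) (hb : b ∈ B)
    (hab : a ≠ b) :
    Disjoint (componentOf H (Bᶜ ∪ {a}) a) (componentOf H (Bᶜ ∪ {b}) b) := by
  refine Set.disjoint_left.mpr fun w hwa hwb => hab ?_
  obtain ⟨Wa, hWa⟩ := mem_componentOf_iff_exists_walk.mp hwa
  obtain ⟨Wb, hWb⟩ := mem_componentOf_iff_exists_walk.mp hwb
  refine hB.eq_of_forall_mem_edges_exists_notMem ha hb (Wa.append Wb.reverse) fun e he => ?_
  rw [Walk.edges_append, Walk.edges_reverse, List.mem_append, List.mem_reverse] at he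
  exact he.elim (exists_notMem_of_mem_edges Wa hWa e) (exists_notMem_of_mem_edges Wb hWb e)

theorem IsBlock.not_adj_of_mem_componentOf (hB : IsBlock H B) (ha : a ∈ B) (hb : b ∈ B)
    (hab : a ≠ b) (hw : w ∈ componentOf H (Bᶜ ∪ {a}) a) (hwa : w ≠ a) : ¬ H.Adj b w := by
  intro hbw
  have hwB : w ∈ Bᶜ := hw.2.1.resolve_right hwa
  have hw' : w ∈ componentOf H (Bᶜ ∪ {b}) b :=
    mem_componentOf_of_adj (self_mem_componentOf (Or.inr rfl)) (Or.inl hwB) hbw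
  exact Set.disjoint_left.mp (hB.disjoint_componentOf ha hb hab) hw hw'

open Function in
theorem HasPerfectMatchingOn.iUnion {ι : Type*} {S : ι → Set V}
    (h : ∀ i, HasPerfectMatchingOn H (S i)) (hS : Pairwise (Disjoint on S)) :
    HasPerfectMatchingOn H (⋃ i, S i) := by
  choose M hMS hM using h
  refine ⟨⨆ i, M i, by simp [Subgraph.verts_iSup, hMS], Subgraph.IsMatching.iSup hM ?_⟩
  intro i j hij
  rw [(hM i).support_eq_verts, (hM j).support_eq_verts, hMS, hMS]
  exact hS hij

end

theorem stmt_12 {V : Type*} (H : SimpleGraph V) (hH : H.Connected)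
    (B : Set V) (hB : IsBlock H B)
    (k : ℕ) (hk : 0 < k) (u : Fin k → V) (huinj : Function.Injective u)
    (hurange : Set.range u = B)
    (G' : Fin k → Set V) (hG' : ∀ i : Fin k, G' i = componentOf H (Bᶜ ∪ {u i}) (u i))
    (T : Fin k → Set V)
    (hT₁sub : T ⟨0, hk⟩ ⊆ G' ⟨0, hk⟩ \ {u ⟨0, hk⟩})
    (hT₁dom : ∀ v ∈ G' ⟨0, hk⟩, v ∉ T ⟨0, hk⟩ → v ≠ u ⟨0, hk⟩ →
      ∃ w ∈ T ⟨0, hk⟩, H.Adj v w)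
    (hT₁nadj : ∀ w ∈ T ⟨0, hk⟩, ¬ H.Adj (u ⟨0, hk⟩) w)
    (hT₁pm : HasPerfectMatchingOn H (T ⟨0, hk⟩))
    (hTi : ∀ i : Fin k, i ≠ ⟨0, hk⟩ →
      T i ⊆ G' i ∧ DominatingOn H (G' i) (T i) ∧
        HasPerfectMatchingOn H (T i) ∧ u i ∉ T i) :
    DominatingOn H ({u ⟨0, hk⟩}ᶜ : Set V) (⋃ i : Fin k, T i) ∧
      (∀ w ∈ ⋃ i : Fin k, T i, ¬ H.Adj (u ⟨0, hk⟩) w) ∧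
      HasPerfectMatchingOn H (⋃ i : Fin k, T i) := by
  set i₀ : Fin k := ⟨0, hk⟩
  have huB (i : Fin k) : u i ∈ B := hurange ▸ Set.mem_range_self i
  have hTG (i : Fin k) : T i ⊆ G' i := by
    rcases eq_or_ne i i₀ with rfl | hi
    exacts [fun w hw => (hT₁sub hw).1, (hTi i hi).1]
  refine ⟨fun v hv hvT => ?_, fun w hw hadj => ?_, ?_⟩
  · obtain ⟨b, hb, hvb⟩ := exists_mem_componentOf hH ⟨_, huB i₀⟩ v
    obtain ⟨i, rfl⟩ := hurange.symm ▸ hb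
    rw [← hG'] at hvb
    have hvTi : v ∉ T i := fun h => hvT (Set.mem_iUnion_of_mem i h)
    obtain ⟨w, hw, hvw⟩ : ∃ w ∈ T i, H.Adj v w := by
      rcases eq_or_ne i i₀ with rfl | hi
      exacts [hT₁dom v hvb hvTi hv, (hTi i hi).2.1 v hvb hvTi]
    exact ⟨w, Set.mem_iUnion_of_mem i hw, hvw⟩
  · obtain ⟨i, hwi⟩ := Set.mem_iUnion.mp hw
    rcases eq_or_ne i i₀ with rfl | hi
    · exact hT₁nadj w hwi hadj
    · refine hB.not_adj_of_mem_componentOf (huB i) (huB i₀) (huinj.ne hi) ?_ ?_ hadj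
      exacts [hG' i ▸ hTG i hwi, fun h => (hTi i hi).2.2.2 (h ▸ hwi)]
  · refine HasPerfectMatchingOn.iUnion (fun i => ?_) fun i j hij => ?_
    · rcases eq_or_ne i i₀ with rfl | hi
      exacts [hT₁pm, (hTi i hi).2.2.1]
    · refine Set.disjoint_of_subset (hTG i) (hTG j) ?_
      rw [hG', hG']
      exact hB.disjoint_componentOf (huB i) (huB j) (huinj.ne hij)
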